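/- Let W be the 0/1 adjacency matrix of a directed simple graph with exactly h edges (i.e., W has exactly h nonzero entries, all off-diagonal). If (Wʰ)(i,n) ≥ 1 and (Wᵗ)(i,n) = 0 for all 1 ≤ t ≤ h−1, then there is a directed walk of length h from i to n that uses h distinct edges, i.e., the h edges of the graph form a directed path from i to n in which each edge is used exactly once. -/
import Mathlib

lemma walk_of_pow {n : ℕ} (W : Matrix (Fin n) (Fin n) ℕ) :
    ∀ m (a b : Fin n), (W ^ m) a b ≠ 0 →
    ∃ v : ℕ → Fin n, v 0 = a ∧ v m = b ∧ ∀ k < m, W (v k) (v (k+1)) ≠ 0 := by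
  intro m
  induction m with
  | zero =>
    intro a b hab
    rw [pow_zero] at hab
    simp only [Matrix.one_apply, ne_eq, ite_eq_right_iff, not_forall] at hab
    exact ⟨fun _ => a, rfl, hab.1 ▸ rfl, fun k hk => absurd hk (Nat.not_lt_zero k)⟩
  | succ m ih =>
    intro a b hab
    rw [pow_succ', Matrix.mul_apply] at hab
    obtain ⟨c, hc⟩ : ∃ c, W a c * (W ^ m) c b ≠ 0 := by
      by_contra hcon; push_neg at hcon
      exact hab (Finset.sum_eq_zero fun c _ => hcon c)
    have h1 : W a c ≠ 0 := fun hz => hc (by simp [hz])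
    have h2 : (W ^ m) c b ≠ 0 := fun hz => hc (by simp [hz])
    obtain ⟨v, hv0, hvm, hstep⟩ := ih c b h2
    refine ⟨fun k => if k = 0 then a else v (k - 1), by simp, by simp [hvm], ?_⟩
    intro k hk
    cases k with
    | zero => simpa [hv0] using h1
    | succ j => simpa using hstep j (by omega)

lemma pow_of_walk {n : ℕ} (W : Matrix (Fin n) (Fin n) ℕ) :
    ∀ m (v : ℕ → Fin n), (∀ k < m, W (v k) (v (k+1)) ≠ 0) →
    (W ^ m) (v 0) (v m) ≠ 0 := by
  intro m
  induction m with
  | zero => intro v _; simp [Matrix.one_apply]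
  | succ m ih =>
    intro v hstep
    have h1 := hstep 0 (Nat.succ_pos m)
    have h2 := ih (fun k => v (k+1)) (fun k hk => hstep (k+1) (by omega))
    rw [pow_succ', Matrix.mul_apply]
    intro hsum
    rw [Finset.sum_eq_zero_iff] at hsum
    have := hsum (v 1) (Finset.mem_univ _)
    rcases Nat.mul_eq_zero.mp this with hz | hz
    · exact h1 hz
    · exact h2 hz

/-- if `W` is the 0/1 adjacency matrix of a directed simple graph
(no self-loops) with exactly `h` edges, `(W^h)(i,n) ≥ 1` and `(W^t)(i,n) = 0` for
`1 ≤ t ≤ h-1`, then the `h` edges of the graph form a directed path of length `h`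
from `i` to `n`: there is a walk of length `h` from `i` to `n` with pairwise distinct
edges, containing every edge of the graph. -/
theorem stmt5 (n h : ℕ) (hn : 0 < n) (hh : 1 ≤ h)
    (W : Matrix (Fin n) (Fin n) ℕ)
    (h01 : ∀ a b, W a b = 0 ∨ W a b = 1)
    (hdiag : ∀ a, W a a = 0)
    (hcard : ((Finset.univ : Finset (Fin n × Fin n)).filter
      (fun p => W p.1 p.2 ≠ 0)).card = h)
    (i : Fin n) (dest : Fin n) (hdest : (dest : ℕ) = n - 1)
    (hpow : 1 ≤ (W ^ h) i dest)
    (hzero : ∀ t : ℕ, 1 ≤ t → t ≤ h - 1 → (W ^ t) i dest = 0) :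
    ∃ v : Fin (h + 1) → Fin n,
      v 0 = i ∧ v (Fin.last h) = dest ∧
      (∀ k : Fin h, W (v k.castSucc) (v k.succ) = 1) ∧
      (Function.Injective fun k : Fin h => (v k.castSucc, v k.succ)) ∧
      (∀ a b : Fin n, W a b = 1 → ∃ k : Fin h, v k.castSucc = a ∧ v k.succ = b) := by
  obtain ⟨v, hv0, hvh, hstep⟩ := walk_of_pow W h i dest (by omega)
  -- edges are pairwise distinct
  have hdist : ∀ s t : ℕ, s < h → t < h → v s = v t → v (s+1) = v (t+1) → s = t := by
    have key : ∀ s t : ℕ, s < t → t < h → v s = v t → v (s+1) = v (t+1) → False := by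
      intro s t hst hth hvst hvst1
      set L := h - (t - s) with hL
      have hL1 : 1 ≤ L := by omega
      have hL2 : L ≤ h - 1 := by omega
      set w : ℕ → Fin n := fun k => if k ≤ s then v k else v (k + (t - s)) with hw
      have hw0 : w 0 = i := by simp [hw, hv0]
      have hwL : w L = dest := by
        have hLs : ¬ L ≤ s := by omega
        have : L + (t - s) = h := by omega
        simp only [hw, if_neg hLs, this, hvh]
      have hwstep : ∀ k < L, W (w k) (w (k+1)) ≠ 0 := by
        intro k hk
        rcases lt_trichotomy k s with hks | hks | hks
        · have h1 : w k = v k := by simp only [hw, if_pos (le_of_lt hks)]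
          have h2 : w (k+1) = v (k+1) := by simp only [hw, if_pos (Nat.succ_le_of_lt hks)]
          rw [h1, h2]
          exact hstep k (by omega)
        · subst hks
          have h1 : w k = v k := by simp only [hw, if_pos (le_refl k)]
          have h2 : w (k+1) = v (t+1) := by
            have hne : ¬ k + 1 ≤ k := by omega
            have heq : k + 1 + (t - k) = t + 1 := by omega
            simp only [hw, if_neg hne, heq]
          rw [h1, h2, ← hvst1]
          exact hstep k (by omega)
        · have h1 : w k = v (k + (t - s)) := by
            simp only [hw, if_neg (show ¬ k ≤ s by omega)]
          have h2 : w (k+1) = v (k + 1 + (t - s)) := by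
            simp only [hw, if_neg (show ¬ k + 1 ≤ s by omega)]
          rw [h1, h2]
          have heq : k + (t - s) + 1 = k + 1 + (t - s) := by omega
          rw [← heq]
          exact hstep (k + (t - s)) (by omega)
      have := pow_of_walk W L w hwstep
      rw [hw0, hwL] at this
      exact this (hzero L hL1 hL2)
    intro s t hs ht h1 h2
    rcases lt_trichotomy s t with hlt | heq | hgt
    · exact absurd (key s t hlt ht h1 h2) not_false
    · exact heq
    · exact absurd (key t s hgt hs h1.symm h2.symm) not_false
  -- the packaged vertex function
  refine ⟨fun k => v k, by simp [hv0], by simp [Fin.last, hvh], ?_, ?_, ?_⟩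
  · intro k
    rcases h01 (v k.castSucc) (v (k.succ : Fin (h+1))) with hz | ho
    · exact absurd hz (by simpa using hstep k k.isLt)
    · simpa using ho
  · intro a b hab
    simp only [Prod.mk.injEq, Fin.coe_castSucc, Fin.val_succ] at hab
    exact Fin.ext (hdist a b a.isLt b.isLt hab.1 hab.2)
  · intro a b hab
    -- cardinality argument
    set E := ((Finset.univ : Finset (Fin n × Fin n)).filter (fun p => W p.1 p.2 ≠ 0)) with hE
    set e : Fin h → Fin n × Fin n := fun k => (v k, v (k+1)) with he
    have hinj : Function.Injective e := by
      intro s t hst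
      simp only [he, Prod.mk.injEq] at hst
      exact Fin.ext (hdist s t s.isLt t.isLt hst.1 hst.2)
    have hsub : Finset.image e Finset.univ ⊆ E := by
      intro p hp
      simp only [Finset.mem_image, Finset.mem_univ, true_and] at hp
      obtain ⟨k, hk⟩ := hp
      simp only [hE, Finset.mem_filter, Finset.mem_univ, true_and, ← hk, he]
      exact hstep k k.isLt
    have hcardim : (Finset.image e Finset.univ).card = h := by
      rw [Finset.card_image_of_injective _ hinj, Finset.card_univ, Fintype.card_fin]
    have heqset : Finset.image e Finset.univ = E :=
      Finset.eq_of_subset_of_card_le hsub (by rw [hcardim, hcard])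
    have hmem : (a, b) ∈ E := by
      simp [hE, hab]
    rw [← heqset] at hmem
    simp only [Finset.mem_image, Finset.mem_univ, true_and] at hmem
    obtain ⟨k, hk⟩ := hmem
    refine ⟨k, ?_, ?_⟩
    · simpa using congrArg Prod.fst hk
    · simpa using congrArg Prod.snd hk
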